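/- For n = 2 and the candidate measure with ν(X₁) = ν(X₂) = 4k/(3k-1) constant on singletons, the value sup over the three critical set types of |f_{k,2}(A) - ν(A)| equals 3 - 4k/(3k-1) - 4/(3k-1), which tends to 5/3 as k → ∞; hence K ≥ 5/3 follows from the n = 2 construction alone. -/

import Mathlib

open Finset Filter

def fkn (n k : ℕ) (A : Finset (Fin n × Fin k)) : ℝ :=
  if A = ∅ then 0
  else if (∀ j : Fin n, ∃ i : Fin k, (j, i) ∈ A) ∧ (∃ j : Fin n, ∀ i : Fin k, (j, i) ∈ A)
    then 3 else 1

def OneAdditive {Ω : Type*} [DecidableEq Ω] (f : Finset Ω → ℝ) : Prop :=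
  f ∅ = 0 ∧ ∀ A B : Finset Ω, Disjoint A B → |f A + f B - f (A ∪ B)| ≤ 1

def IsAdditive {Ω : Type*} [DecidableEq Ω] (μ : Finset Ω → ℝ) : Prop :=
  μ ∅ = 0 ∧ ∀ A B : Finset Ω, Disjoint A B → μ (A ∪ B) = μ A + μ B

/-- The candidate measure on `Ω_{k,2}` assigning mass `4/(3k-1)` to each singleton. -/
noncomputable def nu2 (k : ℕ) (A : Finset (Fin 2 × Fin k)) : ℝ :=
  (A.card : ℝ) * (4 / (3 * (k : ℝ) - 1))

/-!
Against the uniform measure with singleton mass `4/(3k-1)`, `fkn 2 k` deviates by exactly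
`(5k-7)/(3k-1) = 3 - 4k/(3k-1) - 4/(3k-1)` on each of the three critical sets. Conversely, for an
arbitrary additive `ν`, choose `ω₁ ∈ X₁` and `ω₂ ∈ X₂` of at most average mass: the deviations of
`ν` from `fkn 2 k` on the critical sets built from `ω₁, ω₂` cannot all be below `(5k-7)/(3k-1)`.
Since `fkn n k` is `1`-additive (its sets of value `3` are upward closed and pairwise
intersecting), a uniform constant `K` satisfies `K ≥ (5k-7)/(3k-1)` for every `k`, hence `K ≥ 5/3`.
-/

section Additivity

variable {α β : Type*} [DecidableEq α] [DecidableEq β]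

theorem OneAdditive.comp_map {f : Finset β → ℝ} (hf : OneAdditive f) (e : α ↪ β) :
    OneAdditive fun A => f (A.map e) := by
  refine ⟨by simpa using hf.1, fun A B hAB => ?_⟩
  simpa only [map_union] using hf.2 _ _ ((disjoint_map e).mpr hAB)

theorem IsAdditive.comp_map {μ : Finset β → ℝ} (hμ : IsAdditive μ) (e : α ↪ β) :
    IsAdditive fun A => μ (A.map e) := by
  refine ⟨by simpa using hμ.1, fun A B hAB => ?_⟩
  simpa only [map_union] using hμ.2 _ _ ((disjoint_map e).mpr hAB)

theorem IsAdditive.eq_sum_singleton {μ : Finset α → ℝ} (hμ : IsAdditive μ) (A : Finset α) :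
    μ A = ∑ x ∈ A, μ {x} := by
  induction A using Finset.induction_on with
  | empty => simpa using hμ.1
  | insert a s ha ih =>
    rw [sum_insert ha, ← ih, insert_eq, hμ.2 _ _ (disjoint_singleton_left.mpr ha)]

theorem isAdditive_card_mul (c : ℝ) : IsAdditive fun A : Finset α => (A.card : ℝ) * c := by
  refine ⟨by simp, fun A B hAB => ?_⟩
  simp only [card_union_of_disjoint hAB, Nat.cast_add, add_mul]

end Additivity

def OneAdditiveNearAdditive (Ω : Type*) [DecidableEq Ω] (K : ℝ) : Prop :=
  ∀ f : Finset Ω → ℝ, OneAdditive f → ∃ μ : Finset Ω → ℝ, IsAdditive μ ∧ ∀ A, |f A - μ A| ≤ K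

theorem OneAdditiveNearAdditive.of_equiv {α β : Type*} [DecidableEq α] [DecidableEq β]
    {K : ℝ} (e : α ≃ β) (h : OneAdditiveNearAdditive β K) : OneAdditiveNearAdditive α K := by
  intro f hf
  obtain ⟨μ, hμ, hμf⟩ := h _ (hf.comp_map e.symm.toEmbedding)
  refine ⟨_, hμ.comp_map e.toEmbedding, fun A => ?_⟩
  simpa [Finset.map_map] using hμf (A.map e.toEmbedding)

section CriticalSets

variable {n k : ℕ}

abbrev MeetsAllContainsRow (A : Finset (Fin n × Fin k)) : Prop :=
  (∀ j : Fin n, ∃ i : Fin k, (j, i) ∈ A) ∧ (∃ j : Fin n, ∀ i : Fin k, (j, i) ∈ A)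

theorem fkn_eq_ite (A : Finset (Fin n × Fin k)) :
    fkn n k A = if A = ∅ then 0 else if MeetsAllContainsRow A then 3 else 1 := rfl

theorem MeetsAllContainsRow.mono {A B : Finset (Fin n × Fin k)} (hA : MeetsAllContainsRow A)
    (hAB : A ⊆ B) : MeetsAllContainsRow B :=
  ⟨fun j => (hA.1 j).imp fun _ hi => hAB hi, hA.2.imp fun _ hj i => hAB (hj i)⟩

theorem MeetsAllContainsRow.not_disjoint {A B : Finset (Fin n × Fin k)}
    (hA : MeetsAllContainsRow A) (hB : MeetsAllContainsRow B) : ¬Disjoint A B := by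
  obtain ⟨j, hj⟩ := hB.2
  obtain ⟨i, hi⟩ := hA.1 j
  exact fun hAB => disjoint_left.mp hAB hi (hj i)

theorem oneAdditive_fkn (n k : ℕ) : OneAdditive (fkn n k) := by
  refine ⟨by simp [fkn], fun A B hAB => ?_⟩
  rcases eq_or_ne A ∅ with rfl | hA
  · simp [fkn]
  rcases eq_or_ne B ∅ with rfl | hB
  · simp [fkn]
  have hAB' : A ∪ B ≠ ∅ := by simp [hA]
  rw [fkn_eq_ite, fkn_eq_ite, fkn_eq_ite, if_neg hA, if_neg hB, if_neg hAB']
  by_cases hPA : MeetsAllContainsRow A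
  · rw [if_pos hPA, if_neg fun hPB => hPA.not_disjoint hPB hAB,
      if_pos (hPA.mono subset_union_left)]
    norm_num
  by_cases hPB : MeetsAllContainsRow B
  · rw [if_neg hPA, if_pos hPB, if_pos (hPB.mono subset_union_right)]
    norm_num
  rw [if_neg hPA, if_neg hPB]
  split_ifs <;> norm_num

theorem fkn_two_filter_fst_union_singleton {j j' : Fin 2} (hj : j ≠ j') (ω : Fin k) :
    fkn 2 k ((univ.filter fun x => x.1 = j) ∪ {(j', ω)}) = 3 := by
  rw [fkn_eq_ite, if_neg (by simp), if_pos]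
  refine ⟨fun l => ⟨ω, ?_⟩, j, fun i => by simp⟩
  rcases eq_or_ne l j' with rfl | hl
  · simp
  · simp [show l = j by omega]

theorem fkn_two_sdiff_pair (hk : 2 ≤ k) (ω₁ ω₂ : Fin k) :
    fkn 2 k (univ \ {((0 : Fin 2), ω₁), ((1 : Fin 2), ω₂)}) = 1 := by
  obtain ⟨i, hi⟩ := Fintype.exists_ne_of_one_lt_card (by simp; omega) ω₁
  have hne : univ \ {((0 : Fin 2), ω₁), ((1 : Fin 2), ω₂)} ≠ ∅ :=
    ne_empty_of_mem (a := (0, i)) (by simp [hi])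
  rw [fkn_eq_ite, if_neg hne, if_neg]
  rintro ⟨-, j, hj⟩
  fin_cases j
  · simpa using hj ω₁
  · simpa using hj ω₂

theorem sum_filter_fst_eq {M : Type*} [AddCommMonoid M] (g : Fin n × Fin k → M) (j : Fin n) :
    ∑ x ∈ univ.filter (fun x => x.1 = j), g x = ∑ i, g (j, i) := by
  rw [sum_filter, Fintype.sum_prod_type, Fintype.sum_eq_single j fun l hl => by simp [hl]]
  simp

theorem IsAdditive.apply_filter_fst_union_singleton {μ : Finset (Fin n × Fin k) → ℝ}
    (hμ : IsAdditive μ) {j j' : Fin n} (hj : j ≠ j') (ω : Fin k) :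
    μ ((univ.filter fun x => x.1 = j) ∪ {(j', ω)}) = ∑ i, μ {(j, i)} + μ {(j', ω)} := by
  rw [hμ.2 _ _ (by simpa using hj.symm), hμ.eq_sum_singleton (univ.filter _), sum_filter_fst_eq]

theorem IsAdditive.apply_sdiff_pair {μ : Finset (Fin 2 × Fin k) → ℝ} (hμ : IsAdditive μ)
    (ω₁ ω₂ : Fin k) :
    μ (univ \ {((0 : Fin 2), ω₁), ((1 : Fin 2), ω₂)}) =
      ∑ i, μ {(0, i)} + ∑ i, μ {(1, i)} - μ {(0, ω₁)} - μ {(1, ω₂)} := by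
  rw [hμ.eq_sum_singleton, sum_sdiff_eq_sub (subset_univ _), sum_pair (by simp),
    Fintype.sum_prod_type, Fin.sum_univ_two]
  ring

end CriticalSets

theorem isAdditive_nu2 (k : ℕ) : IsAdditive (nu2 k) := isAdditive_card_mul _

section CandidateMeasure

variable {k : ℕ}

theorem nu2_singleton (x : Fin 2 × Fin k) : nu2 k {x} = 4 / (3 * k - 1) := by
  simp [nu2]

theorem abs_fkn_sub_nu2_filter_fst_union_singleton (hk : 2 ≤ k) {j j' : Fin 2} (hj : j ≠ j')
    (ω : Fin k) :
    |fkn 2 k ((univ.filter fun x => x.1 = j) ∪ {(j', ω)}) -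
        nu2 k ((univ.filter fun x => x.1 = j) ∪ {(j', ω)})| = (5 * k - 7) / (3 * k - 1) := by
  have hk' : (2 : ℝ) ≤ k := by exact_mod_cast hk
  rw [fkn_two_filter_fst_union_singleton hj,
    (isAdditive_nu2 k).apply_filter_fst_union_singleton hj]
  simp only [nu2_singleton, sum_const, card_univ, Fintype.card_fin, nsmul_eq_mul]
  have hd : (0 : ℝ) < 3 * k - 1 := by linarith
  have h : (3 : ℝ) - (k * (4 / (3 * k - 1)) + 4 / (3 * k - 1)) = (5 * k - 7) / (3 * k - 1) := by
    rw [eq_div_iff hd.ne']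
    linear_combination -((k : ℝ) + 1) * div_mul_cancel₀ (4 : ℝ) hd.ne'
  rw [h, abs_of_nonneg (div_nonneg (by linarith) hd.le)]

theorem abs_fkn_sub_nu2_sdiff_pair (hk : 2 ≤ k) (ω₁ ω₂ : Fin k) :
    |fkn 2 k (univ \ {((0 : Fin 2), ω₁), ((1 : Fin 2), ω₂)}) -
        nu2 k (univ \ {((0 : Fin 2), ω₁), ((1 : Fin 2), ω₂)})| = (5 * k - 7) / (3 * k - 1) := by
  have hk' : (2 : ℝ) ≤ k := by exact_mod_cast hk
  rw [fkn_two_sdiff_pair hk, (isAdditive_nu2 k).apply_sdiff_pair]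
  simp only [nu2_singleton, sum_const, card_univ, Fintype.card_fin, nsmul_eq_mul]
  have hd : (0 : ℝ) < 3 * k - 1 := by linarith
  have h : (k : ℝ) * (4 / (3 * k - 1)) + k * (4 / (3 * k - 1)) - 4 / (3 * k - 1)
      - 4 / (3 * k - 1) - 1 = (5 * k - 7) / (3 * k - 1) := by
    rw [eq_div_iff hd.ne']
    linear_combination (2 * (k : ℝ) - 2) * div_mul_cancel₀ (4 : ℝ) hd.ne'
  rw [abs_sub_comm, h, abs_of_nonneg (div_nonneg (by linarith) hd.le)]

end CandidateMeasure

theorem exists_mul_le_sum {k : ℕ} (hk : 0 < k) (f : Fin k → ℝ) : ∃ i, k * f i ≤ ∑ j, f j := by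
  obtain ⟨i, -, hi⟩ := exists_le_of_sum_le (univ_nonempty_iff.mpr ⟨⟨0, hk⟩⟩)
    (f := fun i => k * f i) (g := fun _ => ∑ j, f j) (by simp [mul_sum])
  exact ⟨i, hi⟩

theorem five_mul_sub_seven_div_le {k K s₁ s₂ a b : ℝ} (hk : 1 ≤ k) (ha : k * a ≤ s₁)
    (hb : k * b ≤ s₂) (h₁ : 3 - (s₁ + b) ≤ K) (h₂ : 3 - (s₂ + a) ≤ K)
    (h₃ : s₁ + s₂ - a - b - 1 ≤ K) : (5 * k - 7) / (3 * k - 1) ≤ K := by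
  have hA : 3 * k - k * s₁ - s₂ ≤ k * K := by nlinarith
  have hB : 3 * k - k * s₂ - s₁ ≤ k * K := by nlinarith
  have hC : (k - 1) * (s₁ + s₂) - k ≤ k * K := by nlinarith
  rw [div_le_iff₀ (by linarith)]
  -- the multipliers `k - 1` and `k + 1` form a dual certificate; the uniform measure with
  -- singleton mass `4 / (3k - 1)` attains the bound
  nlinarith [mul_le_mul_of_nonneg_left (add_le_add hA hB) (by linarith : 0 ≤ k - 1),
    mul_le_mul_of_nonneg_left hC (by linarith : 0 ≤ k + 1)]

theorem IsAdditive.five_mul_sub_seven_div_le {k : ℕ} (hk : 2 ≤ k)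
    {ν : Finset (Fin 2 × Fin k) → ℝ} (hν : IsAdditive ν) {K : ℝ}
    (hK : ∀ A, |fkn 2 k A - ν A| ≤ K) : (5 * k - 7) / (3 * k - 1) ≤ K := by
  -- points of `X₁` and `X₂` of at most average mass give the three critical sets
  obtain ⟨i, hi⟩ := exists_mul_le_sum (by omega) fun i => ν {(0, i)}
  obtain ⟨j, hj⟩ := exists_mul_le_sum (by omega) fun j => ν {(1, j)}
  have h₁ := hK ((univ.filter fun x => x.1 = 0) ∪ {(1, j)})
  have h₂ := hK ((univ.filter fun x => x.1 = 1) ∪ {(0, i)})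
  have h₃ := hK (univ \ {(0, i), (1, j)})
  rw [fkn_two_filter_fst_union_singleton (by decide),
    hν.apply_filter_fst_union_singleton (by decide)] at h₁ h₂
  rw [fkn_two_sdiff_pair hk, hν.apply_sdiff_pair] at h₃
  exact _root_.five_mul_sub_seven_div_le (by exact_mod_cast (by omega : 1 ≤ k)) hi hj
    (abs_le.mp h₁).2 (abs_le.mp h₂).2 (by linarith [abs_le.mp h₃])

theorem three_mul_natCast_sub_one_ne_zero (k : ℕ) : 3 * (k : ℝ) - 1 ≠ 0 := by
  intro h
  have : ((3 * k : ℕ) : ℝ) = 1 := by push_cast; linarith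
  norm_cast at this
  omega

theorem three_sub_div_sub_div (k : ℕ) :
    3 - 4 * k / (3 * k - 1) - 4 / (3 * (k : ℝ) - 1) = (5 * k - 7) / (3 * k - 1) := by
  have := three_mul_natCast_sub_one_ne_zero k
  field_simp
  ring

theorem tendsto_five_mul_sub_seven_div :
    Tendsto (fun k : ℕ => (5 * (k : ℝ) - 7) / (3 * k - 1)) atTop (nhds (5 / 3)) := by
  have hden : Tendsto (fun k : ℕ => 3 * (k : ℝ) - 1) atTop atTop :=
    tendsto_atTop_add_const_right _ (-1)
      (tendsto_natCast_atTop_atTop.const_mul_atTop (by norm_num : (0 : ℝ) < 3))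
  have h := (tendsto_const_nhds (x := (5 / 3 : ℝ))).sub
    ((tendsto_const_nhds (x := (16 / 3 : ℝ))).div_atTop hden)
  rw [sub_zero] at h
  refine h.congr fun k => ?_
  have := three_mul_natCast_sub_one_ne_zero k
  field_simp
  ring

theorem stmt_18 (k : ℕ) (hk : 2 ≤ k) (ω₁ ω₂ : Fin k) :
    (max (|fkn 2 k ((univ.filter fun x => x.1 = 0) ∪ {((1 : Fin 2), ω₂)}) -
            nu2 k ((univ.filter fun x => x.1 = 0) ∪ {((1 : Fin 2), ω₂)})|)
        (max (|fkn 2 k ((univ.filter fun x => x.1 = 1) ∪ {((0 : Fin 2), ω₁)}) -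
                nu2 k ((univ.filter fun x => x.1 = 1) ∪ {((0 : Fin 2), ω₁)})|)
             (|fkn 2 k (univ \ {((0 : Fin 2), ω₁), ((1 : Fin 2), ω₂)}) -
                nu2 k (univ \ {((0 : Fin 2), ω₁), ((1 : Fin 2), ω₂)})|)) =
      3 - 4 * k / (3 * k - 1) - 4 / (3 * (k : ℝ) - 1)) ∧
    Tendsto (fun k : ℕ => 3 - 4 * k / (3 * k - 1) - 4 / (3 * (k : ℝ) - 1)) atTop
      (nhds (5 / 3)) ∧
    (∀ K : ℝ,
      (∀ m : ℕ, ∀ f : Finset (Fin m) → ℝ, OneAdditive f →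
        ∃ μ : Finset (Fin m) → ℝ, IsAdditive μ ∧ ∀ A, |f A - μ A| ≤ K) →
      5 / 3 ≤ K) := by
  refine ⟨?_, by simpa only [three_sub_div_sub_div] using tendsto_five_mul_sub_seven_div, ?_⟩
  · rw [abs_fkn_sub_nu2_filter_fst_union_singleton hk (by decide),
      abs_fkn_sub_nu2_filter_fst_union_singleton hk (by decide), abs_fkn_sub_nu2_sdiff_pair hk,
      max_self, max_self, three_sub_div_sub_div]
  · intro K hK
    refine le_of_tendsto tendsto_five_mul_sub_seven_div (eventually_atTop.2 ⟨2, fun k hk => ?_⟩)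
    obtain ⟨ν, hν, hνK⟩ :=
      OneAdditiveNearAdditive.of_equiv finProdFinEquiv (hK (2 * k)) _ (oneAdditive_fkn 2 k)
    exact hν.five_mul_sub_seven_div_le hk hνK
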